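/- arXiv:math/0508618 — 5 statements merged into one kernel-verified Lean document; each statement's English description precedes it below -/
import Mathlib

section
/- Let B be a closed 2-form on a smooth manifold M. Then the map e^B : X+ξ ↦ X + ξ + i_X B preserves the Courant bracket: [e^B u, e^B v] = e^B [u,v] for all sections u, v of TM ⊕ T*M. -/
noncomputable section

open scoped BigOperators

variable {E : Type*} [NormedAddCommGroup E] [NormedSpace ℝ E]

/-- Vector fields on the model vector space `E` (local model of a smooth manifold). -/
abbrev VF (E : Type*) := E → E

/-- 1-forms on `E`. -/
abbrev OneForm (E : Type*) [NormedAddCommGroup E] [NormedSpace ℝ E] := E → (E →L[ℝ] ℝ)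

/-- Lie bracket of vector fields: `[X,Y] = DY(X) - DX(Y)`. -/
def lieBracket (X Y : VF E) : VF E := fun x => fderiv ℝ Y x (X x) - fderiv ℝ X x (Y x)

/-- Exterior derivative of a function. -/
def dFun (f : E → ℝ) : OneForm E := fun x => fderiv ℝ f x

/-- Lie derivative of a 1-form along a vector field, via Cartan's formula
`L_X ξ = i_X dξ + d(i_X ξ)`; here `(dξ)(a,b) = (Dξ a) b - (Dξ b) a`. -/
def lieOneForm (X : VF E) (ξ : OneForm E) : OneForm E := fun x =>
  fderiv ℝ ξ x (X x) - (fderiv ℝ ξ x).flip (X x) + fderiv ℝ (fun y => ξ y (X y)) x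

/-- The Courant bracket `[X+ξ, Y+η] = [X,Y] + L_X η - L_Y ξ - ½ d(i_X η - i_Y ξ)`
on sections of `T ⊕ T*`. -/
def courant (u v : VF E × OneForm E) : VF E × OneForm E :=
  (lieBracket u.1 v.1,
    fun x => lieOneForm u.1 v.2 x - lieOneForm v.1 u.2 x
      - (2⁻¹ : ℝ) • dFun (fun y => v.2 y (u.1 y) - u.2 y (v.1 y)) x)

/-- The natural pairing `(X+ξ, Y+η) = ½(η(X) + ξ(Y))` on sections of `T ⊕ T*`. -/
def cpair (u v : VF E × OneForm E) : E → ℝ := fun x => (v.2 x (u.1 x) + u.2 x (v.1 x)) / 2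


lemma skewB (B : E → (E →L[ℝ] E →L[ℝ] ℝ)) (hBalt : ∀ x a, B x a a = 0) (x a b : E) :
    B x b a = - B x a b := by
  have h := hBalt x (a + b)
  simp [map_add, ContinuousLinearMap.add_apply, hBalt x a, hBalt x b] at h
  linarith

lemma fderiv_B_app (B : E → (E →L[ℝ] E →L[ℝ] ℝ)) (hB : ContDiff ℝ (⊤ : ℕ∞) B) (x b c a : E) :
    fderiv ℝ (fun y => B y b c) x a = fderiv ℝ B x a b c := by
  have hBd : DifferentiableAt ℝ B x := hB.differentiable (by simp) x
  have h1 : fderiv ℝ (fun y => B y b) x = (fderiv ℝ B x).flip b := by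
    have := fderiv_clm_apply hBd (differentiableAt_const b)
    simpa using this
  have h2 := fderiv_clm_apply (hBd.clm_apply (differentiableAt_const b)) (differentiableAt_const c)
  rw [h2, h1]; simp

lemma fderiv_B_skew (B : E → (E →L[ℝ] E →L[ℝ] ℝ)) (hBalt : ∀ x a, B x a a = 0)
    (hB : ContDiff ℝ (⊤ : ℕ∞) B) (x a b c : E) :
    fderiv ℝ B x a b c = - fderiv ℝ B x a c b := by
  rw [← fderiv_B_app B hB, ← fderiv_B_app B hB]
  have he : (fun y => B y b c) = fun y => -((fun y => B y c b) y) :=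
    funext fun y => skewB B hBalt y c b
  rw [he, fderiv_fun_neg]
  simp

set_option maxHeartbeats 2000000 in

/-- for a closed 2-form `B`, the map `e^B : X+ξ ↦ X + ξ + i_X B` preserves
the Courant bracket.  Closedness is expressed via the standard formula
`dB(a,b,c) = ∂_a B(b,c) - ∂_b B(a,c) + ∂_c B(a,b)`. -/
theorem courant_eB_invariance (B : E → (E →L[ℝ] E →L[ℝ] ℝ))
    (hBalt : ∀ x a, B x a a = 0) (hB : ContDiff ℝ (⊤ : ℕ∞) B)
    (hBclosed : ∀ x a b c,
      fderiv ℝ (fun y => B y b c) x a - fderiv ℝ (fun y => B y a c) x b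
        + fderiv ℝ (fun y => B y a b) x c = 0)
    (u v : VF E × OneForm E)
    (hu1 : ContDiff ℝ (⊤ : ℕ∞) u.1) (hu2 : ContDiff ℝ (⊤ : ℕ∞) u.2)
    (hv1 : ContDiff ℝ (⊤ : ℕ∞) v.1) (hv2 : ContDiff ℝ (⊤ : ℕ∞) v.2) :
    courant (u.1, fun x => u.2 x + B x (u.1 x)) (v.1, fun x => v.2 x + B x (v.1 x)) =
      ((courant u v).1, fun x => (courant u v).2 x + B x ((courant u v).1 x)) := by
  obtain ⟨X, ξ⟩ := u
  obtain ⟨Y, η⟩ := v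
  simp only at hu1 hu2 hv1 hv2
  refine Prod.ext rfl ?_
  funext x
  ext b
  have hBd : DifferentiableAt ℝ B x := hB.differentiable (by simp) x
  have hXd : DifferentiableAt ℝ X x := hu1.differentiable (by simp) x
  have hξd : DifferentiableAt ℝ ξ x := hu2.differentiable (by simp) x
  have hYd : DifferentiableAt ℝ Y x := hv1.differentiable (by simp) x
  have hηd : DifferentiableAt ℝ η x := hv2.differentiable (by simp) x
  have hBY : fderiv ℝ (fun y => B y (Y y)) x
      = (B x).comp (fderiv ℝ Y x) + (fderiv ℝ B x).flip (Y x) := fderiv_clm_apply hBd hYd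
  have hBX : fderiv ℝ (fun y => B y (X y)) x
      = (B x).comp (fderiv ℝ X x) + (fderiv ℝ B x).flip (X x) := fderiv_clm_apply hBd hXd
  have hζY : fderiv ℝ (fun y => η y + B y (Y y)) x
      = fderiv ℝ η x + ((B x).comp (fderiv ℝ Y x) + (fderiv ℝ B x).flip (Y x)) := by
    rw [fderiv_fun_add hηd (hBd.clm_apply hYd), hBY]
  have hζX : fderiv ℝ (fun y => ξ y + B y (X y)) x
      = fderiv ℝ ξ x + ((B x).comp (fderiv ℝ X x) + (fderiv ℝ B x).flip (X x)) := by
    rw [fderiv_fun_add hξd (hBd.clm_apply hXd), hBX]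
  have hsX : fderiv ℝ (fun y => (η y + B y (Y y)) (X y)) x
      = (η x + B x (Y x)).comp (fderiv ℝ X x)
        + (fderiv ℝ η x + ((B x).comp (fderiv ℝ Y x) + (fderiv ℝ B x).flip (Y x))).flip (X x) := by
    rw [fderiv_clm_apply (hηd.fun_add (hBd.clm_apply hYd)) hXd, hζY]
  have hsY : fderiv ℝ (fun y => (ξ y + B y (X y)) (Y y)) x
      = (ξ x + B x (X x)).comp (fderiv ℝ Y x)
        + (fderiv ℝ ξ x + ((B x).comp (fderiv ℝ X x) + (fderiv ℝ B x).flip (X x))).flip (Y x) := by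
    rw [fderiv_clm_apply (hξd.fun_add (hBd.clm_apply hXd)) hYd, hζX]
  have hηX : fderiv ℝ (fun y => η y (X y)) x
      = (η x).comp (fderiv ℝ X x) + (fderiv ℝ η x).flip (X x) := fderiv_clm_apply hηd hXd
  have hξY : fderiv ℝ (fun y => ξ y (Y y)) x
      = (ξ x).comp (fderiv ℝ Y x) + (fderiv ℝ ξ x).flip (Y x) := fderiv_clm_apply hξd hYd
  have hdL : fderiv ℝ (fun y => (η y + B y (Y y)) (X y) - (ξ y + B y (X y)) (Y y)) x
      = fderiv ℝ (fun y => (η y + B y (Y y)) (X y)) x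
        - fderiv ℝ (fun y => (ξ y + B y (X y)) (Y y)) x :=
    fderiv_sub ((hηd.add (hBd.clm_apply hYd)).clm_apply hXd)
      ((hξd.add (hBd.clm_apply hXd)).clm_apply hYd)
  have hdR : fderiv ℝ (fun y => η y (X y) - ξ y (Y y)) x
      = fderiv ℝ (fun y => η y (X y)) x - fderiv ℝ (fun y => ξ y (Y y)) x :=
    fderiv_sub (hηd.clm_apply hXd) (hξd.clm_apply hYd)
  have cl := hBclosed x (X x) (Y x) b
  rw [fderiv_B_app B hB, fderiv_B_app B hB, fderiv_B_app B hB] at cl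
  have sk1 : B x (fderiv ℝ Y x b) (X x) = - B x (X x) (fderiv ℝ Y x b) :=
    skewB B hBalt x _ _
  have sk2 : B x (fderiv ℝ X x b) (Y x) = - B x (Y x) (fderiv ℝ X x b) :=
    skewB B hBalt x _ _
  have sk3 : fderiv ℝ B x b (Y x) (X x) = - fderiv ℝ B x b (X x) (Y x) :=
    fderiv_B_skew B hBalt hB x b _ _
  simp only [courant, lieOneForm, dFun, lieBracket]
  rw [hζY, hζX, hsX, hsY, hηX, hξY, hdL, hdR, hsX, hsY, hηX, hξY]
  simp only [ContinuousLinearMap.add_apply, ContinuousLinearMap.sub_apply,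
    ContinuousLinearMap.coe_comp', Function.comp_apply, ContinuousLinearMap.flip_apply,
    ContinuousLinearMap.smul_apply, smul_eq_mul, map_sub, ContinuousLinearMap.coe_sub',
    Pi.sub_apply]
  linarith [cl, sk1, sk2, sk3]
end
end

section
/- Let g be a Riemannian metric on M, and for a vector field X set X^± = X ± g(X,·) as sections of TM ⊕ T*M. Define Δ_X Y = [X^−, Y^+] − ([X,Y])^− using the Courant bracket. Then Δ_X Y is a 1-form (its vector field component vanishes), and Δ_{fX} Y = f Δ_X Y and Δ_X (fY) = f Δ_X Y + 2(Xf) g(Y,·) for all smooth functions f. -/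
noncomputable section

open scoped BigOperators

variable {E : Type*} [NormedAddCommGroup E] [NormedSpace ℝ E]

/-- The lift `X^+ = X + g(X,·)` of a vector field to `T ⊕ T*` via a metric `g`. -/
def liftPlus (g : E → (E →L[ℝ] E →L[ℝ] ℝ)) (X : VF E) : VF E × OneForm E :=
  (X, fun x => g x (X x))

/-- The lift `X^- = X - g(X,·)`. -/
def liftMinus (g : E → (E →L[ℝ] E →L[ℝ] ℝ)) (X : VF E) : VF E × OneForm E :=
  (X, fun x => -(g x (X x)))

/-- `Δ_X Y = [X^-, Y^+] - ([X,Y])^-` (Courant bracket). -/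
def Delta (g : E → (E →L[ℝ] E →L[ℝ] ℝ)) (X Y : VF E) : VF E × OneForm E :=
  (fun x => (courant (liftMinus g X) (liftPlus g Y)).1 x - lieBracket X Y x,
   fun x => (courant (liftMinus g X) (liftPlus g Y)).2 x + g x (lieBracket X Y x))


lemma fderiv_g_symm (g : E → (E →L[ℝ] E →L[ℝ] ℝ))
    (hgsym : ∀ x a b, g x a b = g x b a) (hg : Differentiable ℝ g)
    (x a u v : E) : fderiv ℝ g x a u v = fderiv ℝ g x a v u := by
  have key : ∀ u v : E, fderiv ℝ (fun y => g y u v) x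
      = ((fderiv ℝ g x).flip u).flip v := by
    intro u v
    have h1 : fderiv ℝ (fun y => g y u) x = (fderiv ℝ g x).flip u := by
      simpa using fderiv_clm_apply (hg x) (differentiableAt_const u)
    have h2 := fderiv_clm_apply (c := fun y => g y u) (u := fun _ => v)
      ((hg x).clm_apply (differentiableAt_const u)) (differentiableAt_const v)
    simpa [h1] using h2
  have hfun : (fun y => g y u v) = (fun y => g y v u) := funext fun y => hgsym y u v
  have e : ((fderiv ℝ g x).flip u).flip v = ((fderiv ℝ g x).flip v).flip u := by
    rw [← key, hfun, key]
  simpa using congrArg (fun T => T a) e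

lemma Delta2 (g : E → (E →L[ℝ] E →L[ℝ] ℝ))
    (hgsym : ∀ x a b, g x a b = g x b a) (hg : ContDiff ℝ (⊤ : ℕ∞) g)
    (X Y : VF E) (hX : ContDiff ℝ (⊤ : ℕ∞) X) (hY : ContDiff ℝ (⊤ : ℕ∞) Y) (x a : E) :
    (Delta g X Y).2 x a = fderiv ℝ g x (X x) (Y x) a + fderiv ℝ g x (Y x) (X x) a
      - fderiv ℝ g x a (X x) (Y x) + 2 * g x (fderiv ℝ Y x (X x)) a := by
  have hgd : Differentiable ℝ g := hg.differentiable (by simp)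
  have hXd : Differentiable ℝ X := hX.differentiable (by simp)
  have hYd : Differentiable ℝ Y := hY.differentiable (by simp)
  have hgY : fderiv ℝ (fun y => g y (Y y)) x
      = (g x).comp (fderiv ℝ Y x) + (fderiv ℝ g x).flip (Y x) :=
    fderiv_clm_apply (hgd x) (hYd x)
  have hgX : fderiv ℝ (fun y => g y (X y)) x
      = (g x).comp (fderiv ℝ X x) + (fderiv ℝ g x).flip (X x) :=
    fderiv_clm_apply (hgd x) (hXd x)
  have hgXneg : fderiv ℝ (fun y => -(g y (X y))) x
      = -((g x).comp (fderiv ℝ X x) + (fderiv ℝ g x).flip (X x)) := by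
    rw [fderiv_fun_neg, hgX]
  have cY : DifferentiableAt ℝ (fun y => g y (Y y)) x := (hgd x).clm_apply (hYd x)
  have cX : DifferentiableAt ℝ (fun y => g y (X y)) x := (hgd x).clm_apply (hXd x)
  have hgYX : fderiv ℝ (fun y => g y (Y y) (X y)) x
      = (g x (Y x)).comp (fderiv ℝ X x) + (fderiv ℝ (fun y => g y (Y y)) x).flip (X x) :=
    fderiv_clm_apply cY (hXd x)
  have hgXY : fderiv ℝ (fun y => g y (X y) (Y y)) x
      = (g x (X x)).comp (fderiv ℝ Y x) + (fderiv ℝ (fun y => g y (X y)) x).flip (Y x) :=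
    fderiv_clm_apply cX (hYd x)
  have hneg2 : fderiv ℝ (fun y => (-(g y (X y))) (Y y)) x
      = -(fderiv ℝ (fun y => g y (X y) (Y y)) x) := by
    have : (fun y => (-(g y (X y))) (Y y)) = fun y => -(g y (X y) (Y y)) := by
      funext y; simp
    rw [this, fderiv_fun_neg]
  have hdiff : fderiv ℝ (fun y => g y (Y y) (X y) - (-(g y (X y))) (Y y)) x
      = fderiv ℝ (fun y => g y (Y y) (X y)) x + fderiv ℝ (fun y => g y (X y) (Y y)) x := by
    have d1 : DifferentiableAt ℝ (fun y => g y (Y y) (X y)) x := cY.clm_apply (hXd x)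
    have d2 : DifferentiableAt ℝ (fun y => g y (X y) (Y y)) x := cX.clm_apply (hYd x)
    have : (fun y => g y (Y y) (X y) - (-(g y (X y))) (Y y))
        = fun y => g y (Y y) (X y) + g y (X y) (Y y) := by
      funext y; simp [sub_neg_eq_add]
    rw [this, fderiv_fun_add d1 d2]
  have s1 : g x (Y x) (fderiv ℝ X x a) = g x (fderiv ℝ X x a) (Y x) := hgsym _ _ _
  have s2 : g x (X x) (fderiv ℝ Y x a) = g x (fderiv ℝ Y x a) (X x) := hgsym _ _ _
  have s3 : fderiv ℝ g x a (Y x) (X x) = fderiv ℝ g x a (X x) (Y x) :=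
    fderiv_g_symm g hgsym hgd x a _ _
  simp only [Delta, courant, lieOneForm, dFun, lieBracket, liftMinus, liftPlus,
    hgY, hgX, hgXneg, hgYX, hgXY, hneg2, hdiff]
  simp only [ContinuousLinearMap.add_apply, ContinuousLinearMap.sub_apply,
    ContinuousLinearMap.neg_apply, ContinuousLinearMap.flip_apply,
    ContinuousLinearMap.comp_apply, ContinuousLinearMap.smul_apply, smul_eq_mul,
    map_sub, map_add, map_neg]
  linear_combination (1/2 : ℝ) * s1 + (1/2 : ℝ) * s2 - (1/2 : ℝ) * s3

/-- `Δ_X Y` is a 1-form (vector part zero), is `C^∞`-linear in `X`, and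
satisfies `Δ_X (fY) = f Δ_X Y + 2(Xf) g(Y,·)`. -/
theorem Delta_tensorial (g : E → (E →L[ℝ] E →L[ℝ] ℝ))
    (hgsym : ∀ x a b, g x a b = g x b a)
    (hgpos : ∀ x a, a ≠ 0 → 0 < g x a a)
    (hg : ContDiff ℝ (⊤ : ℕ∞) g) (X Y : VF E) (f : E → ℝ)
    (hX : ContDiff ℝ (⊤ : ℕ∞) X) (hY : ContDiff ℝ (⊤ : ℕ∞) Y) (hf : ContDiff ℝ (⊤ : ℕ∞) f) :
    (∀ x, (Delta g X Y).1 x = 0) ∧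
    Delta g (fun x => f x • X x) Y =
      (fun x => f x • (Delta g X Y).1 x, fun x => f x • (Delta g X Y).2 x) ∧
    Delta g X (fun x => f x • Y x) =
      (fun x => f x • (Delta g X Y).1 x,
       fun x => f x • (Delta g X Y).2 x + (2 * fderiv ℝ f x (X x)) • g x (Y x)) := by
  have h0 : ∀ (X' Y' : VF E) (x : E), (Delta g X' Y').1 x = 0 := by
    intro X' Y' x
    simp [Delta, courant, liftMinus, liftPlus, sub_self]
  refine ⟨h0 X Y, ?_, ?_⟩
  · refine Prod.ext (funext fun x => ?_) (funext fun x => ContinuousLinearMap.ext fun a => ?_)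
    · simp only [h0, smul_zero]
    · rw [ContinuousLinearMap.smul_apply,
        Delta2 g hgsym hg (fun x => f x • X x) Y (hf.smul hX) hY x a, Delta2 g hgsym hg X Y hX hY x a]
      simp only [map_smul, ContinuousLinearMap.smul_apply, smul_eq_mul]
      ring
  · refine Prod.ext (funext fun x => ?_) (funext fun x => ContinuousLinearMap.ext fun a => ?_)
    · simp only [h0, smul_zero]
    · have hsmul : fderiv ℝ (fun y => f y • Y y) x
          = f x • fderiv ℝ Y x + (fderiv ℝ f x).smulRight (Y x) :=
        fderiv_fun_smul ((hf.differentiable (by simp)) x) ((hY.differentiable (by simp)) x)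
      rw [Delta2 g hgsym hg X (fun x => f x • Y x) hX (hf.smul hY) x a, ContinuousLinearMap.add_apply,
        ContinuousLinearMap.smul_apply, Delta2 g hgsym hg X Y hX hY x a, hsmul]
      simp only [map_smul, map_add, ContinuousLinearMap.smul_apply, smul_eq_mul,
        ContinuousLinearMap.add_apply, ContinuousLinearMap.smulRight_apply]
      ring
end
end

section
/- Let g be a Riemannian metric on M, X^± = X ± g(X,·), and define the connection ∇ by 2 g(∇_X Y, ·) = [X^−, Y^+] − ([X,Y])^−. Then ∇ is metric: X g(Y,Z) = g(∇_X Y, Z) + g(Y, ∇_X Z) for all vector fields X, Y, Z. -/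
noncomputable section

open scoped BigOperators

variable {E : Type*} [NormedAddCommGroup E] [NormedSpace ℝ E]

lemma diff_g (g : E → (E →L[ℝ] E →L[ℝ] ℝ)) (hg : ContDiff ℝ (⊤ : ℕ∞) g) (x : E) :
    DifferentiableAt ℝ g x := (hg.differentiable (by simp)).differentiableAt

lemma hasFD_scalar (g : E → (E →L[ℝ] E →L[ℝ] ℝ)) (hg : ContDiff ℝ (⊤ : ℕ∞) g)
    (W V : VF E) (hW : ContDiff ℝ (⊤ : ℕ∞) W) (hV : ContDiff ℝ (⊤ : ℕ∞) V) (x : E) :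
    HasFDerivAt (fun y => g y (W y) (V y))
      ((g x (W x)).comp (fderiv ℝ V x) +
        ((g x).comp (fderiv ℝ W x) + (fderiv ℝ g x).flip (W x)).flip (V x)) x := by
  exact ((diff_g g hg x).hasFDerivAt.clm_apply
    (hW.differentiable (by simp) x).hasFDerivAt).clm_apply
    (hV.differentiable (by simp) x).hasFDerivAt

lemma fderiv_g_scalar (g : E → (E →L[ℝ] E →L[ℝ] ℝ)) (hg : ContDiff ℝ (⊤ : ℕ∞) g)
    (W V : VF E) (hW : ContDiff ℝ (⊤ : ℕ∞) W) (hV : ContDiff ℝ (⊤ : ℕ∞) V) (x u : E) :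
    fderiv ℝ (fun y => g y (W y) (V y)) x u
      = fderiv ℝ g x u (W x) (V x) + g x (fderiv ℝ W x u) (V x)
        + g x (W x) (fderiv ℝ V x u) := by
  rw [(hasFD_scalar g hg W V hW hV x).fderiv]
  simp [ContinuousLinearMap.add_apply, ContinuousLinearMap.comp_apply,
    ContinuousLinearMap.flip_apply]
  ring

lemma fderiv_g_sym (g : E → (E →L[ℝ] E →L[ℝ] ℝ)) (hg : ContDiff ℝ (⊤ : ℕ∞) g)
    (hgsym : ∀ x a b, g x a b = g x b a) (x u a b : E) :
    fderiv ℝ g x u a b = fderiv ℝ g x u b a := by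
  have h1 := fderiv_g_scalar g hg (fun _ => a) (fun _ => b) contDiff_const contDiff_const x u
  have h2 := fderiv_g_scalar g hg (fun _ => b) (fun _ => a) contDiff_const contDiff_const x u
  have he : (fun y => g y a b) = fun y => g y b a := funext fun y => hgsym y a b
  rw [he] at h1
  simp [fderiv_const] at h1 h2
  rw [← h1, h2]

lemma Delta2_apply (g : E → (E →L[ℝ] E →L[ℝ] ℝ)) (hg : ContDiff ℝ (⊤ : ℕ∞) g)
    (X Y : VF E) (hX : ContDiff ℝ (⊤ : ℕ∞) X) (hY : ContDiff ℝ (⊤ : ℕ∞) Y) (x w : E) :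
    (Delta g X Y).2 x w =
      g x (fderiv ℝ Y x (X x)) w + fderiv ℝ g x (X x) (Y x) w
      + g x (fderiv ℝ X x (Y x)) w + fderiv ℝ g x (Y x) (X x) w
      + g x (Y x) (fderiv ℝ X x w) + g x (X x) (fderiv ℝ Y x w)
      - (2⁻¹:ℝ) * (fderiv ℝ g x w (Y x) (X x) + g x (fderiv ℝ Y x w) (X x)
          + g x (Y x) (fderiv ℝ X x w)
          + fderiv ℝ g x w (X x) (Y x) + g x (fderiv ℝ X x w) (Y x)
          + g x (X x) (fderiv ℝ Y x w))
      + g x (fderiv ℝ Y x (X x)) w - g x (fderiv ℝ X x (Y x)) w := by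
  have hgx := (diff_g g hg x).hasFDerivAt
  have hXx := (hX.differentiable (by simp) x).hasFDerivAt
  have hYx := (hY.differentiable (by simp) x).hasFDerivAt
  have h1 : HasFDerivAt (fun y => g y (Y y))
      ((g x).comp (fderiv ℝ Y x) + (fderiv ℝ g x).flip (Y x)) x := hgx.clm_apply hYx
  have h2 : HasFDerivAt (fun y => -(g y (X y)))
      (-((g x).comp (fderiv ℝ X x) + (fderiv ℝ g x).flip (X x))) x :=
    (hgx.clm_apply hXx).neg
  have h3 : HasFDerivAt (fun y => g y (Y y) (X y))
      ((g x (Y x)).comp (fderiv ℝ X x)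
        + ((g x).comp (fderiv ℝ Y x) + (fderiv ℝ g x).flip (Y x)).flip (X x)) x :=
    h1.clm_apply hXx
  have h4 : HasFDerivAt (fun y => (-(g y (X y))) (Y y))
      (((-(g x (X x))).comp (fderiv ℝ Y x)
        + (-((g x).comp (fderiv ℝ X x) + (fderiv ℝ g x).flip (X x))).flip (Y x))) x :=
    h2.clm_apply hYx
  have h5 : HasFDerivAt (fun y => g y (Y y) (X y) - (-(g y (X y))) (Y y)) _ x := h3.sub h4
  simp only [Delta, courant, liftMinus, liftPlus, lieOneForm, dFun, lieBracket]
  rw [h1.fderiv, h2.fderiv, h3.fderiv, h4.fderiv, h5.fderiv]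
  simp only [ContinuousLinearMap.add_apply, ContinuousLinearMap.sub_apply,
    ContinuousLinearMap.neg_apply, ContinuousLinearMap.smul_apply,
    ContinuousLinearMap.comp_apply, ContinuousLinearMap.flip_apply, map_sub,
    smul_eq_mul]
  ring

/-- the connection `∇` defined by `2 g(∇_X Y, ·) = [X^-, Y^+] - ([X,Y])^-`
is metric: `X g(Y,Z) = g(∇_X Y, Z) + g(Y, ∇_X Z)`. -/
theorem nabla_metric (g : E → (E →L[ℝ] E →L[ℝ] ℝ))
    (hgsym : ∀ x a b, g x a b = g x b a)
    (hgpos : ∀ x a, a ≠ 0 → 0 < g x a a)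
    (hg : ContDiff ℝ (⊤ : ℕ∞) g) (X Y Z : VF E)
    (hX : ContDiff ℝ (⊤ : ℕ∞) X) (hY : ContDiff ℝ (⊤ : ℕ∞) Y) (hZ : ContDiff ℝ (⊤ : ℕ∞) Z)
    (nXY nXZ : VF E)
    (hnXY : ∀ x, (2 : ℝ) • g x (nXY x) = (Delta g X Y).2 x)
    (hnXZ : ∀ x, (2 : ℝ) • g x (nXZ x) = (Delta g X Z).2 x) :
    ∀ x, fderiv ℝ (fun y => g y (Y y) (Z y)) x (X x) =
      g x (nXY x) (Z x) + g x (Y x) (nXZ x) := by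
  intro x
  have hY2 := congrArg (fun φ : E →L[ℝ] ℝ => φ (Z x)) (hnXY x)
  have hZ2 := congrArg (fun φ : E →L[ℝ] ℝ => φ (Y x)) (hnXZ x)
  simp only [ContinuousLinearMap.smul_apply, smul_eq_mul] at hY2 hZ2
  rw [Delta2_apply g hg X Y hX hY x (Z x)] at hY2
  rw [Delta2_apply g hg X Z hX hZ x (Y x)] at hZ2
  rw [fderiv_g_scalar g hg Y Z hY hZ x (X x)]
  have s1 := fderiv_g_sym g hg hgsym x (X x) (Y x) (Z x)
  have s2 := fderiv_g_sym g hg hgsym x (Z x) (Y x) (X x)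
  have s3 := fderiv_g_sym g hg hgsym x (Y x) (Z x) (X x)
  have s4 := fderiv_g_sym g hg hgsym x (Y x) (X x) (Z x)
  have s5 := fderiv_g_sym g hg hgsym x (Z x) (X x) (Y x)
  have g1 := hgsym x (Y x) (nXZ x)
  have g2 := hgsym x (Y x) (fderiv ℝ Z x (X x))
  have g3 := hgsym x (Y x) (fderiv ℝ X x (Z x))
  have g4 := hgsym x (Z x) (fderiv ℝ X x (Y x))
  have g5 := hgsym x (X x) (fderiv ℝ Y x (Z x))
  have g6 := hgsym x (X x) (fderiv ℝ Z x (Y x))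
  linarith
end
end

section
/- Let g be a Riemannian metric on M, X^± = X ± g(X,·), and define ∇ by 2 g(∇_X Y, ·) = [X^−, Y^+] − ([X,Y])^−. Then ∇ is torsion-free: ∇_X Y − ∇_Y X = [X,Y]. Consequently ∇ is the Levi-Civita connection of g. -/
noncomputable section

open scoped BigOperators

variable {E : Type*} [NormedAddCommGroup E] [NormedSpace ℝ E]

lemma lieOneForm_neg (Z : VF E) (ξ : OneForm E) (x : E) :
    lieOneForm Z (fun y => -(ξ y)) x = -(lieOneForm Z ξ x) := by
  have h1 : fderiv ℝ (fun y => -(ξ y)) x = -(fderiv ℝ ξ x) := fderiv_neg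
  have h2 : (fun y => (fun y => -(ξ y)) y (Z y)) = fun y => -(ξ y (Z y)) := by
    funext y; simp
  simp only [lieOneForm, h1, h2, fderiv_neg]
  ext a
  simp [ContinuousLinearMap.flip_apply]
  try ring

lemma delta_sub (g : E → (E →L[ℝ] E →L[ℝ] ℝ))
    (hgsym : ∀ x a b, g x a b = g x b a) (X Y : VF E) (x : E) :
    (Delta g X Y).2 x - (Delta g Y X).2 x = (2 : ℝ) • g x (lieBracket X Y x) := by
  have hfun : (fun y => (g y (Y y)) (X y) - (-(g y (X y))) (Y y))
      = (fun y => (g y (X y)) (Y y) - (-(g y (Y y))) (X y)) := by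
    funext y
    simp only [ContinuousLinearMap.neg_apply]
    rw [hgsym y (Y y) (X y)]
  have hbr : lieBracket Y X x = -(lieBracket X Y x) := by
    simp [lieBracket]
  simp only [Delta, courant, liftPlus, liftMinus]
  rw [hfun, lieOneForm_neg Y (fun y => g y (X y)) x,
      lieOneForm_neg X (fun y => g y (Y y)) x, hbr, map_neg]
  ext a
  simp
  ring

/-- the connection `∇` defined by `2 g(∇_X Y, ·) = [X^-, Y^+] - ([X,Y])^-`
is torsion-free: `∇_X Y - ∇_Y X = [X,Y]` (hence it is the Levi-Civita connection of `g`). -/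
theorem nabla_torsion_free (g : E → (E →L[ℝ] E →L[ℝ] ℝ))
    (hgsym : ∀ x a b, g x a b = g x b a)
    (hgpos : ∀ x a, a ≠ 0 → 0 < g x a a)
    (hg : ContDiff ℝ (⊤ : ℕ∞) g) (X Y : VF E)
    (hX : ContDiff ℝ (⊤ : ℕ∞) X) (hY : ContDiff ℝ (⊤ : ℕ∞) Y)
    (nXY nYX : VF E)
    (hnXY : ∀ x, (2 : ℝ) • g x (nXY x) = (Delta g X Y).2 x)
    (hnYX : ∀ x, (2 : ℝ) • g x (nYX x) = (Delta g Y X).2 x) :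
    ∀ x, nXY x - nYX x = lieBracket X Y x := by
  intro x
  have hd := delta_sub g hgsym X Y x
  have h2 : (2 : ℝ) • g x (nXY x) - (2 : ℝ) • g x (nYX x)
      = (2 : ℝ) • g x (lieBracket X Y x) := by
    rw [hnXY x, hnYX x, hd]
  have h3 : g x (nXY x) - g x (nYX x) = g x (lieBracket X Y x) := by
    have := h2
    refine ContinuousLinearMap.ext fun a => ?_
    have h := DFunLike.congr_fun this a
    simp only [ContinuousLinearMap.sub_apply, ContinuousLinearMap.smul_apply, smul_eq_mul] at h ⊢
    linarith
  set v := nXY x - nYX x - lieBracket X Y x with hv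
  have hgv : g x v = 0 := by
    rw [hv, map_sub, map_sub, h3, sub_self]
  by_contra hne
  have hvne : v ≠ 0 := by
    rw [hv]; intro h; exact hne (sub_eq_zero.mp h)
  have := hgpos x v hvne
  rw [hgv] at this
  simp at this
end
end

section
/- Let S be a Clifford module over Cl(V) for an inner product space V, with an invariant pairing ⟨·,·⟩ between S and its dual such that ⟨v·φ₁, φ₂⟩ is symmetric in φ₁, φ₂. Define Q(φ) ∈ V by (Q(φ), v) = ⟨v·φ, φ⟩ and f(ρ₁,ρ₂) = (Q(ρ₁), Q(ρ₂)). Then for any A ∈ GL(2,ℝ) acting on the pair (ρ₁,ρ₂) ∈ S ⊗ ℝ², f(A(ρ₁,ρ₂)) = (det A)² f(ρ₁,ρ₂). -/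
/-!
Write `s = P ρ₁ ρ₂ + P ρ₂ ρ₁`, so that `Q (x ρ₁ + y ρ₂) = x² Q ρ₁ + x y s + y² Q ρ₂`. Nullness of
`Q (x ρ₁ + y ρ₂)` for all `x, y` is the vanishing of a binary quartic form, whose coefficients
say that `Q ρ₁, Q ρ₂` are null, orthogonal to `s`, and that `(s, s) = -2 (Q ρ₁, Q ρ₂)`.
Expanding `f` after the substitution by `A = !![α, β; γ, δ]`, only the terms with `(Q ρ₁, Q ρ₂)`
and `(s, s)` survive, and they add up to `(α δ - β γ)² (Q ρ₁, Q ρ₂)`.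
-/

theorem binary_quartic_coeffs_eq_zero {K : Type*} [Field K] [CharZero K] {c₀ c₁ c₂ c₃ c₄ : K}
    (h : ∀ x y : K, c₀ * x ^ 4 + c₁ * x ^ 3 * y + c₂ * x ^ 2 * y ^ 2 + c₃ * x * y ^ 3
      + c₄ * y ^ 4 = 0) :
    c₀ = 0 ∧ c₁ = 0 ∧ c₂ = 0 ∧ c₃ = 0 ∧ c₄ = 0 := by
  have h₀ : c₀ = 0 := by simpa using h 1 0
  have h₄ : c₄ = 0 := by simpa using h 0 1
  have h₃ : c₃ = 0 := by
    have : (6 : K) * c₃ = 0 := by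
      linear_combination h 1 2 - 3 * h 1 1 - h 1 (-1) + 3 * h₀ - 12 * h₄
    simpa using this
  have h₂ : c₂ = 0 := by
    have : (2 : K) * c₂ = 0 := by linear_combination h 1 1 + h 1 (-1) - 2 * h₀ - 2 * h₄
    simpa using this
  exact ⟨h₀, by linear_combination h 1 1 - h₀ - h₂ - h₃ - h₄, h₂, h₃, h₄⟩

theorem LinearMap.apply_smul_add_smul_self {R S V : Type*} [CommRing R] [AddCommGroup S]
    [Module R S] [AddCommGroup V] [Module R V] (P : S →ₗ[R] S →ₗ[R] V) (ρ σ : S) (x y : R) :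
    P (x • ρ + y • σ) (x • ρ + y • σ) =
      x ^ 2 • P ρ ρ + (x * y) • (P ρ σ + P σ ρ) + y ^ 2 • P σ σ := by
  simp only [map_add, map_smul, LinearMap.add_apply, LinearMap.smul_apply]
  module

theorem LinearMap.apply_pencil_eq_det_sq {K V : Type*} [Field K] [CharZero K] [AddCommGroup V]
    [Module K V] (B : V →ₗ[K] V →ₗ[K] K) (hB : ∀ v w, B v w = B w v) {a b c : V}
    (hnull : ∀ x y : K,
      B (x ^ 2 • a + (x * y) • b + y ^ 2 • c) (x ^ 2 • a + (x * y) • b + y ^ 2 • c) = 0)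
    (α β γ δ : K) :
    B (α ^ 2 • a + (α * β) • b + β ^ 2 • c) (γ ^ 2 • a + (γ * δ) • b + δ ^ 2 • c) =
      (α * δ - β * γ) ^ 2 * B a c := by
  obtain ⟨haa, hab, hac, hbc, hcc⟩ := binary_quartic_coeffs_eq_zero
    (c₀ := B a a) (c₁ := 2 * B a b) (c₂ := 2 * B a c + B b b) (c₃ := 2 * B b c) (c₄ := B c c)
    fun x y ↦ by
      have h := hnull x y
      simp only [map_add, map_smul, LinearMap.add_apply, LinearMap.smul_apply, smul_eq_mul,
        hB b a, hB c a, hB c b] at h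
      linear_combination h
  simp only [map_add, map_smul, LinearMap.add_apply, LinearMap.smul_apply, smul_eq_mul,
    hB b a, hB c a, hB c b]
  linear_combination α ^ 2 * γ ^ 2 * haa + (α ^ 2 * γ * δ + α * β * γ ^ 2) / 2 * hab
    + α * β * γ * δ * hac + (α * β * δ ^ 2 + β ^ 2 * γ * δ) / 2 * hbc + β ^ 2 * δ ^ 2 * hcc

theorem quartic_relative_invariant_general
    (V S : Type*) [AddCommGroup V] [Module ℝ V] [AddCommGroup S] [Module ℝ S]
    (ip : V →ₗ[ℝ] V →ₗ[ℝ] ℝ) (hipsym : ∀ v w, ip v w = ip w v)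
    (P : S →ₗ[ℝ] S →ₗ[ℝ] V)
    (hnull : ∀ φ : S, ip (P φ φ) (P φ φ) = 0)
    (ρ₁ ρ₂ : S) (A : Matrix (Fin 2) (Fin 2) ℝ) :
    ip (P (A 0 0 • ρ₁ + A 0 1 • ρ₂) (A 0 0 • ρ₁ + A 0 1 • ρ₂))
       (P (A 1 0 • ρ₁ + A 1 1 • ρ₂) (A 1 0 • ρ₁ + A 1 1 • ρ₂)) =
      A.det ^ 2 * ip (P ρ₁ ρ₁) (P ρ₂ ρ₂) := by
  have hpencil (x y : ℝ) := P.apply_smul_add_smul_self ρ₁ ρ₂ x y ▸ hnull (x • ρ₁ + y • ρ₂)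
  rw [P.apply_smul_add_smul_self, P.apply_smul_add_smul_self,
    ip.apply_pencil_eq_det_sq hipsym hpencil, Matrix.det_fin_two]

/-- let `S` be a Clifford module over `Cl(V)` (Clifford multiplication
`m : V → S → T` into the opposite spinor space `T = S*`), with an invariant pairing
`pr : T × S → ℝ` such that `⟨v·φ₁, φ₂⟩ = pr (m v φ₁) φ₂` is symmetric in `φ₁, φ₂`.
Let `P : S × S → V` be the (symmetric bilinear) moment map defined by
`(P(φ₁,φ₂), v) = ⟨v·φ₁, φ₂⟩`, set `Q(φ) = P(φ,φ)` (which is a null vector of `V`, as for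
the half-spinors of `Spin(5,5)`), and `f(ρ₁,ρ₂) = (Q(ρ₁), Q(ρ₂))`.  Then for any
`A ∈ GL(2,ℝ)` (indeed any 2×2 real matrix) acting on the `ℝ²` factor of `S ⊗ ℝ²`,
`f(A(ρ₁,ρ₂)) = (det A)² f(ρ₁,ρ₂)`. -/
theorem quartic_relative_invariant
    (V S T : Type*) [AddCommGroup V] [Module ℝ V] [AddCommGroup S] [Module ℝ S]
    [AddCommGroup T] [Module ℝ T]
    (ip : V →ₗ[ℝ] V →ₗ[ℝ] ℝ) (hipsym : ∀ v w, ip v w = ip w v)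
    (m : V →ₗ[ℝ] S →ₗ[ℝ] T) (pr : T →ₗ[ℝ] S →ₗ[ℝ] ℝ)
    (hsym : ∀ v φ ψ, pr (m v φ) ψ = pr (m v ψ) φ)
    (P : S →ₗ[ℝ] S →ₗ[ℝ] V)
    (hP : ∀ φ ψ v, ip (P φ ψ) v = pr (m v φ) ψ)
    (hPsym : ∀ φ ψ, P φ ψ = P ψ φ)
    (hnull : ∀ φ : S, ip (P φ φ) (P φ φ) = 0)
    (ρ₁ ρ₂ : S) (A : Matrix (Fin 2) (Fin 2) ℝ) :
    ip (P (A 0 0 • ρ₁ + A 0 1 • ρ₂) (A 0 0 • ρ₁ + A 0 1 • ρ₂))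
       (P (A 1 0 • ρ₁ + A 1 1 • ρ₂) (A 1 0 • ρ₁ + A 1 1 • ρ₂)) =
      A.det ^ 2 * ip (P ρ₁ ρ₁) (P ρ₂ ρ₂) :=
  quartic_relative_invariant_general V S ip hipsym P hnull ρ₁ ρ₂ A
end
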